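/- Let (X, d, ≪, ≤, τ) be a Lorentzian length space such that the metric space (X, d) is locally compact. If X is stably causal (K⁺ is antisymmetric), then X is strongly causal (the Alexandrov topology coincides with the metric topology). -/

import Mathlib

open scoped NNReal ENNReal
open Set Filter Topology

/-- A Lorentzian pre-length space: a causal space `(X, ≪, ≤)` carried by a metric space `X`,
together with a time separation function `τ : X × X → [0, ∞]`. -/
structure LorentzianPreLengthSpace (X : Type*) [MetricSpace X] where
  /-- The chronological relation `≪`. -/
  chron : X → X → Prop
  /-- The causal relation `≤`. -/
  causal : X → X → Prop
  chron_trans : ∀ {x y z : X}, chron x y → chron y z → chron x z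
  causal_refl : ∀ x : X, causal x x
  causal_trans : ∀ {x y z : X}, causal x y → causal y z → causal x z
  chron_imp_causal : ∀ {x y : X}, chron x y → causal x y
  /-- The time separation function `τ`. -/
  tau : X → X → ℝ≥0∞
  tau_lsc : LowerSemicontinuous fun p : X × X => tau p.1 p.2
  tau_rev_triangle : ∀ {x y z : X}, causal x y → causal y z → tau x y + tau y z ≤ tau x z
  tau_eq_zero : ∀ {x y : X}, ¬ causal x y → tau x y = 0
  tau_pos_iff : ∀ {x y : X}, 0 < tau x y ↔ chron x y

namespace LorentzianPreLengthSpace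

variable {X : Type*} [MetricSpace X] (L : LorentzianPreLengthSpace X)

/-- Chronological future `I⁺(x)`. -/
def Iplus (x : X) : Set X := {y | L.chron x y}

/-- Chronological past `I⁻(x)`. -/
def Iminus (x : X) : Set X := {y | L.chron y x}

/-- Causal future `J⁺(x)`. -/
def Jplus (x : X) : Set X := {y | L.causal x y}

/-- Causal past `J⁻(x)`. -/
def Jminus (x : X) : Set X := {y | L.causal y x}

/-- A future directed causal curve on `[a,b]`: non-constant, Lipschitz, and order preserving
from the order of `[a,b]` to the causal relation. -/
def IsFutureCausalCurve (γ : ℝ → X) (a b : ℝ) : Prop :=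
  a < b ∧ (∃ K : ℝ≥0, LipschitzOnWith K γ (Icc a b)) ∧
    (∃ s ∈ Icc a b, ∃ t ∈ Icc a b, γ s ≠ γ t) ∧
    ∀ ⦃s⦄, s ∈ Icc a b → ∀ ⦃t⦄, t ∈ Icc a b → s < t → L.causal (γ s) (γ t)

/-- A future directed timelike curve on `[a,b]`. -/
def IsFutureTimelikeCurve (γ : ℝ → X) (a b : ℝ) : Prop :=
  a < b ∧ (∃ K : ℝ≥0, LipschitzOnWith K γ (Icc a b)) ∧
    (∃ s ∈ Icc a b, ∃ t ∈ Icc a b, γ s ≠ γ t) ∧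
    ∀ ⦃s⦄, s ∈ Icc a b → ∀ ⦃t⦄, t ∈ Icc a b → s < t → L.chron (γ s) (γ t)

/-- The `τ`-length of a curve: the infimum over all partitions
`a = t₀ < t₁ < ⋯ < t_N = b` (with `N ≥ 1`) of `∑ τ(γ(tᵢ), γ(tᵢ₊₁))`. -/
noncomputable def tauLength (γ : ℝ → X) (a b : ℝ) : ℝ≥0∞ :=
  ⨅ n : ℕ, ⨅ t : {t : Fin (n + 2) → ℝ // StrictMono t ∧ t 0 = a ∧ t (Fin.last (n + 1)) = b},
    ∑ i : Fin (n + 1), L.tau (γ (t.1 i.castSucc)) (γ (t.1 i.succ))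

/-- Causal path connectedness: causally related (distinct) points are joined by a future
directed causal curve, chronologically related points by a future directed timelike curve. -/
def CausallyPathConnected : Prop :=
  (∀ x y : X, L.causal x y → x ≠ y →
      ∃ γ : ℝ → X, ∃ a b : ℝ, L.IsFutureCausalCurve γ a b ∧ γ a = x ∧ γ b = y) ∧
  (∀ x y : X, L.chron x y →
      ∃ γ : ℝ → X, ∃ a b : ℝ, L.IsFutureTimelikeCurve γ a b ∧ γ a = x ∧ γ b = y)

/-- `p ≤_U q`: there is a future directed causal curve from `p` to `q` with image in `U`. -/
def CausalInside (U : Set X) (p q : X) : Prop :=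
  ∃ γ : ℝ → X, ∃ a b : ℝ, L.IsFutureCausalCurve γ a b ∧ γ a = p ∧ γ b = q ∧ γ '' Icc a b ⊆ U

/-- `U` is causally closed: the relation `≤_U` is closed under limits inside `U`. -/
def CausallyClosedNbhd (U : Set X) : Prop :=
  ∀ (p q : X) (pn qn : ℕ → X), (∀ n, L.CausalInside U (pn n) (qn n)) →
    Tendsto pn atTop (𝓝 p) → Tendsto qn atTop (𝓝 q) → p ∈ U → q ∈ U → L.CausalInside U p q

/-- Every point has a causally closed open neighborhood. -/
def LocallyCausallyClosed : Prop :=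
  ∀ x : X, ∃ U : Set X, IsOpen U ∧ x ∈ U ∧ L.CausallyClosedNbhd U

/-- Localizability: every point has a localizing open neighborhood `Ω`. -/
def Localizable : Prop :=
  ∀ x : X, ∃ Ω : Set X, IsOpen Ω ∧ x ∈ Ω ∧
    (∃ C : ℝ≥0, ∀ (γ : ℝ → X) (a b : ℝ), L.IsFutureCausalCurve γ a b →
        γ '' Icc a b ⊆ Ω → eVariationOn γ (Icc a b) ≤ C) ∧
    ∃ ω : X → X → ℝ≥0∞,
      ContinuousOn (fun pq : X × X => ω pq.1 pq.2) (Ω ×ˢ Ω) ∧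
      (∀ p ∈ Ω, ∀ q ∈ Ω, ω p q ≠ ⊤) ∧
      (∀ p ∈ Ω, ∀ q ∈ Ω, ∀ r ∈ Ω, L.causal p q → L.causal q r → ω p q + ω q r ≤ ω p r) ∧
      (∀ p ∈ Ω, ∀ q ∈ Ω, ¬ L.causal p q → ω p q = 0) ∧
      (∀ p ∈ Ω, ∀ q ∈ Ω, (0 < ω p q ↔ L.chron p q)) ∧
      (∀ y ∈ Ω, (L.Iplus y ∩ Ω).Nonempty ∧ (L.Iminus y ∩ Ω).Nonempty) ∧
      (∀ p ∈ Ω, ∀ q ∈ Ω, L.causal p q → p ≠ q →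
        ∃ γ : ℝ → X, ∃ a b : ℝ, L.IsFutureCausalCurve γ a b ∧ γ a = p ∧ γ b = q ∧
          γ '' Icc a b ⊆ Ω ∧ L.tauLength γ a b = ω p q ∧
          ∀ (σ : ℝ → X) (c e : ℝ), L.IsFutureCausalCurve σ c e → σ c = p → σ e = q →
            σ '' Icc c e ⊆ Ω → L.tauLength σ c e ≤ L.tauLength γ a b)

/-- `L` is a Lorentzian length space: causally path connected, locally causally closed,
localizable, and `τ` is the supremum of `τ`-lengths of connecting causal curves
(the supremum of the empty set being `0`). -/
def IsLengthSpace : Prop :=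
  L.CausallyPathConnected ∧ L.LocallyCausallyClosed ∧ L.Localizable ∧
    ∀ x y : X, L.tau x y = sSup {ℓ : ℝ≥0∞ | ∃ γ : ℝ → X, ∃ a b : ℝ,
      L.IsFutureCausalCurve γ a b ∧ γ a = x ∧ γ b = y ∧ ℓ = L.tauLength γ a b}

/-- `K⁺`: the smallest closed and transitive relation containing `J⁺`. -/
def Kplus : Set (X × X) :=
  ⋂₀ {R : Set (X × X) | IsClosed R ∧ (∀ a b c : X, (a, b) ∈ R → (b, c) ∈ R → (a, c) ∈ R) ∧
      {pq : X × X | L.causal pq.1 pq.2} ⊆ R}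

/-- The Alexandrov topology, generated by the chronological diamonds. -/
def AlexandrovTopology : TopologicalSpace X :=
  TopologicalSpace.generateFrom {s : Set X | ∃ x y : X, s = L.Iplus x ∩ L.Iminus y}

/-- Strong causality: the Alexandrov topology coincides with the metric topology. -/
def StronglyCausal : Prop :=
  L.AlexandrovTopology = (inferInstance : TopologicalSpace X)

/-- Non-total imprisonment: causal curves in a compact set have uniformly bounded
`d`-arclength. -/
def NonTotallyImprisoning : Prop :=
  ∀ K : Set X, IsCompact K → ∃ C : ℝ≥0, ∀ (γ : ℝ → X) (a b : ℝ),
    L.IsFutureCausalCurve γ a b → γ '' Icc a b ⊆ K → eVariationOn γ (Icc a b) ≤ C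

/-- Global hyperbolicity. -/
def GloballyHyperbolic : Prop :=
  L.NonTotallyImprisoning ∧ ∀ x y : X, IsCompact (L.Jplus x ∩ L.Jminus y)

/-- Causality: the causal relation is antisymmetric. -/
def Causal : Prop := ∀ x y : X, L.causal x y → L.causal y x → x = y

/-- Causal simplicity. -/
def CausallySimple : Prop :=
  L.Causal ∧ ∀ x : X, IsClosed (L.Jplus x) ∧ IsClosed (L.Jminus x)

/-- Distinguishing. -/
def Distinguishing : Prop :=
  (∀ x y : X, L.Iplus x = L.Iplus y → x = y) ∧ (∀ x y : X, L.Iminus x = L.Iminus y → x = y)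

/-- Reflectivity. -/
def Reflective : Prop :=
  (∀ x y : X, L.Iplus x ⊆ L.Iplus y → L.Iminus y ⊆ L.Iminus x) ∧
  (∀ x y : X, L.Iminus y ⊆ L.Iminus x → L.Iplus x ⊆ L.Iplus y)

/-- Causal continuity. -/
def CausallyContinuous : Prop := L.Distinguishing ∧ L.Reflective

/-- Stable causality: `K⁺` is antisymmetric. -/
def StablyCausal : Prop := ∀ x y : X, (x, y) ∈ L.Kplus → (y, x) ∈ L.Kplus → x = y

end LorentzianPreLengthSpace

/-- A distance homothetic map: `τ̃(f p, f q) = c · τ(p, q)` for some constant `c > 0`. -/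
def DistanceHomothetic {X Y : Type*} [MetricSpace X] [MetricSpace Y]
    (LX : LorentzianPreLengthSpace X) (LY : LorentzianPreLengthSpace Y) (f : X → Y) : Prop :=
  ∃ c : ℝ≥0, 0 < c ∧ ∀ p q : X, LY.tau (f p) (f q) = (c : ℝ≥0∞) * LX.tau p q

/-- A locally causally Lipschitz map. -/
def LocallyCausallyLipschitz {X Y : Type*} [MetricSpace X] [MetricSpace Y]
    (LX : LorentzianPreLengthSpace X) (f : X → Y) : Prop :=
  ∀ x : X, ∃ U : Set X, IsOpen U ∧ x ∈ U ∧ ∃ M : ℝ, 0 < M ∧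
    ∀ x1 ∈ U, ∀ x2 ∈ U, LX.causal x1 x2 → dist (f x1) (f x2) ≤ M * dist x1 x2

/-! Chronological diamonds are open since `τ` is lower semicontinuous; the work is to show that
they shrink to points. Take a ball around `x` with compact boundary sphere. If some diamond
`I⁺(p) ∩ I⁻(q)` with `p ≪ x ≪ q` leaves the ball, a timelike curve from `p` to a point outside it
crosses the sphere at some `y` with `p ≤ y ≤ q`. Were this possible for `p, q` arbitrarily close to
`x`, a limit point `z` of such `y` would satisfy `(x, z), (z, x) ∈ K⁺`, as `K⁺` is closed,
contradicting stable causality. Points `p ≪ x ≪ q` close to `x` exist because `I^±(x)` is nonempty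
and timelike curves are continuous. -/

theorem Metric.exists_isCompact_sphere_subset_of_mem_nhds {X : Type*} [MetricSpace X]
    [LocallyCompactSpace X] {x : X} {U : Set X} (hU : U ∈ 𝓝 x) :
    ∃ ρ > 0, IsCompact (sphere x ρ) ∧ ball x ρ ⊆ U := by
  obtain ⟨ε, hε, hεU⟩ := Metric.mem_nhds_iff.mp hU
  obtain ⟨r, hr, hrK⟩ := Metric.exists_isCompact_closedBall x
  refine ⟨min ε r, lt_min hε hr, hrK.of_isClosed_subset isClosed_sphere ?_,
    (ball_subset_ball (min_le_left ε r)).trans hεU⟩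
  exact sphere_subset_closedBall.trans (closedBall_subset_closedBall (min_le_right ε r))

namespace LorentzianPreLengthSpace

open Metric

variable {X : Type*} [MetricSpace X] {L : LorentzianPreLengthSpace X}

theorem isOpen_chron (L : LorentzianPreLengthSpace X) :
    IsOpen {pq : X × X | L.chron pq.1 pq.2} := by
  simp only [← L.tau_pos_iff]
  exact lowerSemicontinuous_iff_isOpen_preimage.mp L.tau_lsc 0

theorem isOpen_Iplus (x : X) : IsOpen (L.Iplus x) :=
  L.isOpen_chron.preimage (continuous_const.prodMk continuous_id)

theorem isOpen_Iminus (y : X) : IsOpen (L.Iminus y) :=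
  L.isOpen_chron.preimage (continuous_id.prodMk continuous_const)

theorem le_alexandrovTopology (L : LorentzianPreLengthSpace X) :
    (inferInstance : TopologicalSpace X) ≤ L.AlexandrovTopology :=
  le_generateFrom <| by
    rintro _ ⟨x, y, rfl⟩
    exact (L.isOpen_Iplus x).inter (L.isOpen_Iminus y)

theorem alexandrovTopology_le_of_exists_diamond
    (h : ∀ x, ∀ U ∈ 𝓝 x, ∃ p q, x ∈ L.Iplus p ∩ L.Iminus q ∧ L.Iplus p ∩ L.Iminus q ⊆ U) :
    L.AlexandrovTopology ≤ (inferInstance : TopologicalSpace X) := by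
  refine (le_iff_nhds _ _).mpr fun x U hU => ?_
  obtain ⟨p, q, hx, hsub⟩ := h x U hU
  rw [AlexandrovTopology, TopologicalSpace.nhds_generateFrom]
  exact mem_iInf_of_mem _ (mem_iInf_of_mem ⟨hx, p, q, rfl⟩ (mem_principal.mpr hsub))

theorem isClosed_Kplus (L : LorentzianPreLengthSpace X) : IsClosed L.Kplus :=
  isClosed_sInter fun _ hR => hR.1

theorem causal_subset_Kplus (L : LorentzianPreLengthSpace X) :
    {pq : X × X | L.causal pq.1 pq.2} ⊆ L.Kplus :=
  subset_sInter fun _ hR => hR.2.2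

theorem eventually_not_causal_of_notMem_Kplus {x z : X} (h : (x, z) ∉ L.Kplus) :
    ∀ᶠ w : X × X in 𝓝 (x, z), ¬ L.causal w.1 w.2 := by
  filter_upwards [L.isClosed_Kplus.isOpen_compl.mem_nhds h] with w hw
  exact fun hc => hw (L.causal_subset_Kplus hc)

theorem StablyCausal.eventually_not_causal_between (hsc : L.StablyCausal) {x z : X}
    (hzx : z ≠ x) :
    ∀ᶠ w : (X × X) × X in 𝓝 ((x, x), z), ¬ (L.causal w.1.1 w.2 ∧ L.causal w.2 w.1.2) := by
  by_cases hxz : (x, z) ∈ L.Kplus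
  · have hzx' : (z, x) ∉ L.Kplus := fun h => hzx (hsc z x h hxz)
    have hcont : Continuous fun w : (X × X) × X => (w.2, w.1.2) := by fun_prop
    filter_upwards [hcont.continuousAt.eventually (eventually_not_causal_of_notMem_Kplus hzx')]
      with w hw using fun h => hw h.2
  · have hcont : Continuous fun w : (X × X) × X => (w.1.1, w.2) := by fun_prop
    filter_upwards [hcont.continuousAt.eventually (eventually_not_causal_of_notMem_Kplus hxz)]
      with w hw using fun h => hw h.1

theorem StablyCausal.eventually_forall_not_causal_between (hsc : L.StablyCausal) {K : Set X}
    (hK : IsCompact K) {x : X} (hx : x ∉ K) :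
    ∀ᶠ pq : X × X in 𝓝 (x, x), ∀ y ∈ K, ¬ (L.causal pq.1 y ∧ L.causal y pq.2) :=
  hK.eventually_forall_of_forall_eventually fun _ hz =>
    hsc.eventually_not_causal_between (ne_of_mem_of_not_mem hz hx)

namespace IsFutureTimelikeCurve

variable {γ : ℝ → X} {a b : ℝ}

theorem continuousOn (hγ : L.IsFutureTimelikeCurve γ a b) : ContinuousOn γ (Icc a b) :=
  let ⟨_, ⟨_, hK⟩, _⟩ := hγ
  hK.continuousOn

theorem causal_of_le (hγ : L.IsFutureTimelikeCurve γ a b) {s t : ℝ} (hs : s ∈ Icc a b)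
    (ht : t ∈ Icc a b) (hst : s ≤ t) : L.causal (γ s) (γ t) := by
  rcases hst.lt_or_eq with h | rfl
  · exact L.chron_imp_causal (hγ.2.2.2 hs ht h)
  · exact L.causal_refl _

theorem right_mem_closure_Iminus (hγ : L.IsFutureTimelikeCurve γ a b) :
    γ b ∈ closure (L.Iminus (γ b)) := by
  have hb : b ∈ Icc a b := right_mem_Icc.mpr hγ.1.le
  have hb' : b ∈ closure (Ico a b) := by rwa [closure_Ico hγ.1.ne]
  refine closure_mono ?_ (((hγ.continuousOn b hb).mono Ico_subset_Icc_self).mem_closure_image hb')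
  rintro _ ⟨t, ht, rfl⟩
  exact hγ.2.2.2 (Ico_subset_Icc_self ht) hb ht.2

theorem left_mem_closure_Iplus (hγ : L.IsFutureTimelikeCurve γ a b) :
    γ a ∈ closure (L.Iplus (γ a)) := by
  have ha : a ∈ Icc a b := left_mem_Icc.mpr hγ.1.le
  have ha' : a ∈ closure (Ioc a b) := by rwa [closure_Ioc hγ.1.ne]
  refine closure_mono ?_ (((hγ.continuousOn a ha).mono Ioc_subset_Icc_self).mem_closure_image ha')
  rintro _ ⟨t, ht, rfl⟩
  exact hγ.2.2.2 ha (Ioc_subset_Icc_self ht) ht.1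

end IsFutureTimelikeCurve

theorem Localizable.nonempty_Iminus (hloc : L.Localizable) (x : X) : (L.Iminus x).Nonempty :=
  let ⟨_, _, hxΩ, _, _, _, _, _, _, _, hI, _⟩ := hloc x
  (hI x hxΩ).2.mono inter_subset_left

theorem Localizable.nonempty_Iplus (hloc : L.Localizable) (x : X) : (L.Iplus x).Nonempty :=
  let ⟨_, _, hxΩ, _, _, _, _, _, _, _, hI, _⟩ := hloc x
  (hI x hxΩ).1.mono inter_subset_left

theorem CausallyPathConnected.mem_closure_Iminus_self (hcpc : L.CausallyPathConnected) {x : X}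
    (hx : (L.Iminus x).Nonempty) : x ∈ closure (L.Iminus x) := by
  obtain ⟨z, hzx⟩ := hx
  obtain ⟨γ, a, b, hγ, -, rfl⟩ := hcpc.2 z x hzx
  exact hγ.right_mem_closure_Iminus

theorem CausallyPathConnected.mem_closure_Iplus_self (hcpc : L.CausallyPathConnected) {x : X}
    (hx : (L.Iplus x).Nonempty) : x ∈ closure (L.Iplus x) := by
  obtain ⟨z, hxz⟩ := hx
  obtain ⟨γ, a, b, hγ, rfl, -⟩ := hcpc.2 x z hxz
  exact hγ.left_mem_closure_Iplus

theorem CausallyPathConnected.exists_causal_between_dist_eq (hcpc : L.CausallyPathConnected)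
    {p w x : X} {ρ : ℝ} (hpw : L.chron p w) (hp : dist p x ≤ ρ) (hw : ρ ≤ dist w x) :
    ∃ y, L.causal p y ∧ L.causal y w ∧ dist y x = ρ := by
  obtain ⟨γ, a, b, hγ, rfl, rfl⟩ := hcpc.2 p w hpw
  have hab := hγ.1.le
  obtain ⟨t, ht, hρ⟩ := intermediate_value_Icc hab
    ((continuous_id.dist continuous_const).comp_continuousOn hγ.continuousOn) ⟨hp, hw⟩
  exact ⟨γ t, hγ.causal_of_le (left_mem_Icc.mpr hab) ht ht.1,
    hγ.causal_of_le ht (right_mem_Icc.mpr hab) ht.2, hρ⟩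

theorem StablyCausal.exists_diamond_subset_ball (hsc : L.StablyCausal)
    (hcpc : L.CausallyPathConnected) {x : X} (hpast : x ∈ closure (L.Iminus x))
    (hfut : x ∈ closure (L.Iplus x)) {ρ : ℝ} (hρ : 0 < ρ) (hK : IsCompact (sphere x ρ)) :
    ∃ p q, L.chron p x ∧ L.chron x q ∧ L.Iplus p ∩ L.Iminus q ⊆ ball x ρ := by
  have hx : x ∉ sphere x ρ := by simpa using hρ.ne
  obtain ⟨P, hP, Q, hQ, hPQ⟩ := eventually_prod_iff.mp <|
    nhds_prod_eq (x := x) (y := x) ▸ hsc.eventually_forall_not_causal_between hK hx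
  obtain ⟨p, ⟨hPp, hpρ⟩, hpx⟩ := mem_closure_iff_nhds.mp hpast _ (hP.and (ball_mem_nhds x hρ))
  obtain ⟨q, hQq, hxq⟩ := mem_closure_iff_nhds.mp hfut _ hQ
  refine ⟨p, q, hpx, hxq, fun w ⟨hpw, hwq⟩ => ?_⟩
  by_contra hw
  obtain ⟨y, hpy, hyw, hy⟩ := hcpc.exists_causal_between_dist_eq hpw (mem_ball.mp hpρ).le
    (not_lt.mp (mt mem_ball.mpr hw))
  exact hPQ hPp hQq y (mem_sphere.mpr hy) ⟨hpy, L.causal_trans hyw (L.chron_imp_causal hwq)⟩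

end LorentzianPreLengthSpace

/-- a stably causal Lorentzian length space over a locally compact metric
space is strongly causal. -/
theorem stablyCausal_stronglyCausal {X : Type*} [MetricSpace X] [LocallyCompactSpace X]
    (L : LorentzianPreLengthSpace X) (hL : L.IsLengthSpace)
    (hsc : L.StablyCausal) : L.StronglyCausal := by
  obtain ⟨hcpc, -, hloc, -⟩ := hL
  refine le_antisymm (L.alexandrovTopology_le_of_exists_diamond fun x U hU => ?_)
    L.le_alexandrovTopology
  obtain ⟨ρ, hρ, hK, hball⟩ := Metric.exists_isCompact_sphere_subset_of_mem_nhds hU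
  obtain ⟨p, q, hpx, hxq, hsub⟩ := hsc.exists_diamond_subset_ball hcpc
    (hcpc.mem_closure_Iminus_self (hloc.nonempty_Iminus x))
    (hcpc.mem_closure_Iplus_self (hloc.nonempty_Iplus x)) hρ hK
  exact ⟨p, q, ⟨hpx, hxq⟩, hsub.trans hball⟩
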